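/- arXiv:2112.05403 — 2 statements merged into one kernel-verified Lean document; each statement's English description precedes it below -/
import Mathlib

section
/- Let G be a bipartite (multi)graph with exactly k·p edges in which every vertex has degree at most k. Then the edge set of G can be partitioned into k matchings each of cardinality exactly p. -/
/-!
Add `|Y| - p` new left and `|X| - p` new right vertices, and join the `k - deg v` free slots of
every old vertex `v` to new vertices on the other side so that each new vertex receives exactly
`k` of them. The result is a `k`-regular bipartite multigraph, which Hall's theorem splits into
`k` perfect matchings. Each new edge has a new endpoint, so a perfect matching contains at most
`(|Y| - p) + (|X| - p)` new edges and hence at least `p` old ones; as there are `k * p` old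
edges, every matching contains exactly `p`.
-/

open Finset Function

theorem Finset.card_filter_univ_sum {α β : Type*} [Fintype α] [Fintype β]
    (P : α ⊕ β → Prop) [DecidablePred P] :
    #{z | P z} = #{x | P (.inl x)} + #{y | P (.inr y)} := by
  simp only [card_filter, Fintype.sum_sum_type]

theorem Finset.card_filter_sigma_fst {V : Type*} [Fintype V] [DecidableEq V] (n : V → ℕ)
    (v : V) :
    #{d : Σ v, Fin (n v) | d.1 = v} = n v := by
  rw [← Fintype.card_subtype, Fintype.card_congr (Equiv.sigmaSubtype v), Fintype.card_fin]

theorem Fintype.exists_fiber_card_eq {D : Type*} [Fintype D] {s k : ℕ} (h : card D = s * k) :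
    ∃ g : D → Fin s, ∀ i, #{d | g d = i} = k := by
  let e : D ≃ Fin s × Fin k := (equivFinOfCardEq h).trans finProdFinEquiv.symm
  refine ⟨fun d ↦ (e d).1, fun i ↦ ?_⟩
  rw [← card_subtype, card_congr (e.subtypeEquiv (q := fun q ↦ q.1 = i) fun _ ↦ Iff.rfl),
    card_congr (Equiv.prodSubtypeFstEquivSubtypeProd (p := (· = i)))]
  simp

theorem Fintype.card_sigma_fin_sub {V : Type*} [Fintype V] {k p : ℕ} (d : V → ℕ)
    (hd : ∀ v, d v ≤ k) (hsum : ∑ v, d v = k * p) :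
    card (Σ v, Fin (k - d v)) = (card V - p) * k := by
  simp only [card_sigma, card_fin]
  rw [sum_tsub_distrib _ fun v _ ↦ hd v, hsum, sum_const, card_univ, smul_eq_mul, Nat.sub_mul,
    mul_comm k p]

theorem Finset.card_filter_sdiff_of_subset {α : Type*} [DecidableEq α] {s t : Finset α}
    (h : t ⊆ s) (p : α → Prop) [DecidablePred p] :
    #{x ∈ s \ t | p x} = #{x ∈ s | p x} - #{x ∈ t | p x} := by
  rw [← card_sdiff_of_subset (filter_subset_filter p h)]
  congr 1
  ext
  simp only [mem_filter, mem_sdiff]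
  tauto

theorem Finset.card_filter_image_eq_one {X F Z : Type*} [Fintype X] [DecidableEq F] [DecidableEq Z]
    {m : X → F} {g : F → Z} (hg : Bijective (g ∘ m)) (z : Z) :
    #{e ∈ univ.image m | g e = z} = 1 := by
  obtain ⟨x, rfl⟩ := hg.2 z
  rw [filter_image, card_image_of_injective _ hg.1.of_comp, card_eq_one]
  exact ⟨x, by ext x'; simpa using hg.1.eq_iff⟩

theorem Set.InjOn.preimage_inl_of_sumElim {α β γ δ : Type*} {f : α → γ}
    {g : β → γ ⊕ δ} {M : Set (α ⊕ β)} (h : Set.InjOn (Sum.elim (.inl ∘ f) g) M) :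
    Set.InjOn f (.inl ⁻¹' M) :=
  fun _ he _ he' hee' ↦ Sum.inl_injective (h he he' (congrArg Sum.inl hee'))

namespace BipartiteMultigraph

variable {F X Y : Type*} [DecidableEq X] [DecidableEq Y] (a : F → X) (b : F → Y)

def IsRegularOfDegree (s : Finset F) (k : ℕ) : Prop :=
  (∀ x, #{e ∈ s | a e = x} = k) ∧ ∀ y, #{e ∈ s | b e = y} = k

variable {a b} {s M : Finset F} {k : ℕ}

namespace IsRegularOfDegree

theorem card_eq_mul_card_left [Fintype X] (h : IsRegularOfDegree a b s k) :
    #s = k * Fintype.card X := by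
  rw [card_eq_sum_card_fiberwise (f := a) (t := univ) fun _ _ ↦ mem_univ _]
  simp [h.1, mul_comm]

theorem card_eq_mul_card_right [Fintype Y] (h : IsRegularOfDegree a b s k) :
    #s = k * Fintype.card Y := by
  rw [card_eq_sum_card_fiberwise (f := b) (t := univ) fun _ _ ↦ mem_univ _]
  simp [h.2, mul_comm]

theorem injOn_of_degree_one (h : IsRegularOfDegree a b M 1) :
    Set.InjOn a M ∧ Set.InjOn b M := by
  constructor <;> intro e he e' he' hee'
  · exact card_le_one.mp (h.1 (a e)).le e (mem_filter.mpr ⟨he, rfl⟩) e'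
      (mem_filter.mpr ⟨he', hee'.symm⟩)
  · exact card_le_one.mp (h.2 (b e)).le e (mem_filter.mpr ⟨he, rfl⟩) e'
      (mem_filter.mpr ⟨he', hee'.symm⟩)

theorem sdiff [DecidableEq F] (h : IsRegularOfDegree a b s (k + 1))
    (hM : IsRegularOfDegree a b M 1) (hMs : M ⊆ s) : IsRegularOfDegree a b (s \ M) k :=
  ⟨fun x ↦ by rw [card_filter_sdiff_of_subset hMs, h.1, hM.1, Nat.add_sub_cancel],
    fun y ↦ by rw [card_filter_sdiff_of_subset hMs, h.2, hM.2, Nat.add_sub_cancel]⟩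

theorem exists_perfect_matching [Fintype X] [Fintype Y] (h : IsRegularOfDegree a b s (k + 1)) :
    ∃ M ⊆ s, IsRegularOfDegree a b M 1 := by
  classical
  let r (x : X) (y : Y) : Prop := ∃ e ∈ s, a e = x ∧ b e = y
  have hall (A : Finset X) : #A ≤ #{y | ∃ x ∈ A, r x y} := by
    -- count the edges at `A` once by their left and once by their right endpoints
    set S := {e ∈ s | a e ∈ A}
    have hS_left : (k + 1) * #A ≤ #S :=
      mul_card_image_le_card_of_maps_to (fun e he ↦ (mem_filter.mp he).2) _ fun x hx ↦
        (h.1 x).ge.trans <| card_le_card fun e he ↦ by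
          simp only [mem_filter] at he ⊢
          exact ⟨⟨he.1, he.2 ▸ hx⟩, he.2⟩
    have hS_right : #S ≤ (k + 1) * #{y | ∃ x ∈ A, r x y} :=
      card_le_mul_card_image_of_maps_to
        (fun e he ↦ by
          simp only [S, mem_filter] at he
          simpa using ⟨a e, he.2, e, he.1, rfl, rfl⟩)
        _ fun y _ ↦ (card_le_card (filter_subset_filter _ (filter_subset _ s))).trans (h.2 y).le
    exact Nat.le_of_mul_le_mul_left (hS_left.trans hS_right) k.succ_pos
  obtain ⟨f, hf_inj, hf⟩ := (Fintype.all_card_le_filter_rel_iff_exists_injective r).mp hall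
  choose m hms hma hmb using hf
  have hcard : Fintype.card X = Fintype.card Y := Nat.eq_of_mul_eq_mul_left k.succ_pos
    (h.card_eq_mul_card_left.symm.trans h.card_eq_mul_card_right)
  have hbm : Bijective (b ∘ m) := by
    rw [show b ∘ m = f from funext hmb, Fintype.bijective_iff_injective_and_card]
    exact ⟨hf_inj, hcard⟩
  have ham : Bijective (a ∘ m) := by
    rw [show a ∘ m = id from funext hma]
    exact bijective_id
  exact ⟨univ.image m, image_subset_iff.mpr fun x _ ↦ hms x,
    card_filter_image_eq_one ham, card_filter_image_eq_one hbm⟩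

theorem exists_coloring [Fintype X] [Fintype Y] [DecidableEq F]
    (h : IsRegularOfDegree a b s k) :
    ∃ c : F → ℕ, (∀ e ∈ s, c e < k) ∧
      ∀ j < k, IsRegularOfDegree a b {e ∈ s | c e = j} 1 := by
  induction k generalizing s with
  | zero =>
    refine ⟨0, fun e he ↦ absurd (h.1 (a e)) ?_, fun j hj ↦ absurd hj j.not_lt_zero⟩
    exact card_ne_zero_of_mem (mem_filter.mpr ⟨he, rfl⟩)
  | succ k ih =>
    obtain ⟨M, hMs, hM⟩ := h.exists_perfect_matching
    obtain ⟨c, hc_lt, hc⟩ := ih (h.sdiff hM hMs)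
    refine ⟨fun e ↦ if e ∈ M then k else c e, fun e he ↦ ?_, fun j hj ↦ ?_⟩
    · by_cases heM : e ∈ M
      · simp [heM]
      · simpa [heM] using (hc_lt e (mem_sdiff.mpr ⟨he, heM⟩)).trans k.lt_succ_self
    rcases (Nat.lt_succ_iff.mp hj).lt_or_eq with hj | rfl
    · convert hc j hj using 1
      ext e
      by_cases heM : e ∈ M <;> simp [heM, hj.ne']
    · convert hM using 1
      ext e
      by_cases heM : e ∈ M
      · simp [heM, hMs heM]
      · simpa [heM] using fun he ↦ (hc_lt e (mem_sdiff.mpr ⟨he, heM⟩)).ne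

end IsRegularOfDegree

section Completion

variable {E : Type*} [Fintype E]

abbrev FreeSlots {V : Type*} [DecidableEq V] (f : E → V) (k : ℕ) : Type _ :=
  Σ v, Fin (k - #{e | f e = v})

variable (a : E → X) (b : E → Y) {k s₁ s₂ : ℕ} (g₁ : FreeSlots b k → Fin s₁)
  (g₂ : FreeSlots a k → Fin s₂)

/-- The free slots of the right vertices are joined to `s₁` new left vertices by `g₁`, and those
of the left vertices to `s₂` new right vertices by `g₂`; every new edge has a new endpoint. -/
def completionLeft : E ⊕ (FreeSlots b k ⊕ FreeSlots a k) → X ⊕ Fin s₁ :=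
  Sum.elim (.inl ∘ a) (Sum.elim (.inr ∘ g₁) (.inl ∘ Sigma.fst))

def completionRight : E ⊕ (FreeSlots b k ⊕ FreeSlots a k) → Y ⊕ Fin s₂ :=
  Sum.elim (.inl ∘ b) (Sum.elim (.inl ∘ Sigma.fst) (.inr ∘ g₂))

variable [Fintype X] {a b g₁ g₂}

theorem isRegularOfDegree_completion [Fintype Y] (ha : ∀ x, #{e | a e = x} ≤ k)
    (hb : ∀ y, #{e | b e = y} ≤ k) (hg₁ : ∀ i, #{d | g₁ d = i} = k)
    (hg₂ : ∀ i, #{d | g₂ d = i} = k) :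
    IsRegularOfDegree (completionLeft a b g₁) (completionRight a b g₂) univ k := by
  constructor <;> rintro (v | i) <;> rw [card_filter_univ_sum, card_filter_univ_sum] <;>
    simp [completionLeft, completionRight, card_filter_sigma_fst, hg₁, hg₂,
      Nat.add_sub_cancel' (ha _), Nat.add_sub_cancel' (hb _)]

theorem card_sub_le_card_filter_inl [Fintype Y] [DecidableEq E]
    {M : Finset (E ⊕ (FreeSlots b k ⊕ FreeSlots a k))}
    (hM : IsRegularOfDegree (completionLeft a b g₁) (completionRight a b g₂) M 1) :
    Fintype.card X - s₂ ≤ #{e | .inl e ∈ M} := by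
  obtain ⟨hinj₁, hinj₂⟩ := hM.injOn_of_degree_one
  have hsize := hM.card_eq_mul_card_left
  rw [← filter_univ_mem M, card_filter_univ_sum, card_filter_univ_sum, Fintype.card_sum,
    Fintype.card_fin, one_mul] at hsize
  have hnew₁ : #{d | .inr (.inl d) ∈ M} ≤ s₁ :=
    (card_le_card_of_injOn g₁ (fun _ _ ↦ mem_univ _) fun d hd d' hd' hdd' ↦
      Sum.inl_injective <| Sum.inr_injective <| hinj₁ (by simpa using hd) (by simpa using hd')
        (congrArg Sum.inr hdd')).trans_eq (card_fin _)
  have hnew₂ : #{d | .inr (.inr d) ∈ M} ≤ s₂ :=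
    (card_le_card_of_injOn g₂ (fun _ _ ↦ mem_univ _) fun d hd d' hd' hdd' ↦
      Sum.inr_injective <| Sum.inr_injective <| hinj₂ (by simpa using hd) (by simpa using hd')
        (congrArg Sum.inr hdd')).trans_eq (card_fin _)
  omega

end Completion

theorem exists_equitable_coloring {E : Type*} [Fintype E] [Fintype X] [Fintype Y]
    (a : E → X) (b : E → Y) {k p : ℕ} (hcard : Fintype.card E = k * p)
    (ha : ∀ x, #{e | a e = x} ≤ k) (hb : ∀ y, #{e | b e = y} ≤ k) :
    ∃ c : E → Fin k, ∀ j, #{e | c e = j} = p ∧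
      Set.InjOn a {e | c e = j} ∧ Set.InjOn b {e | c e = j} := by
  classical
  rcases Nat.eq_zero_or_pos k with rfl | hk
  · have : IsEmpty E := Fintype.card_eq_zero_iff.mp (by rw [hcard, zero_mul])
    exact ⟨isEmptyElim, fun j ↦ j.elim0⟩
  have hsumA : ∑ x, #{e | a e = x} = k * p := by
    rw [← hcard, ← card_univ, card_eq_sum_card_fiberwise (f := a) fun _ _ ↦ mem_univ _]
  have hsumB : ∑ y, #{e | b e = y} = k * p := by
    rw [← hcard, ← card_univ, card_eq_sum_card_fiberwise (f := b) fun _ _ ↦ mem_univ _]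
  have hpX : p ≤ Fintype.card X := by
    refine Nat.le_of_mul_le_mul_left ?_ hk
    simpa [hsumA, mul_comm] using sum_le_sum fun x (_ : x ∈ univ) ↦ ha x
  obtain ⟨g₁, hg₁⟩ := Fintype.exists_fiber_card_eq (Fintype.card_sigma_fin_sub _ hb hsumB)
  obtain ⟨g₂, hg₂⟩ := Fintype.exists_fiber_card_eq (Fintype.card_sigma_fin_sub _ ha hsumA)
  obtain ⟨c, hc_lt, hc⟩ := (isRegularOfDegree_completion ha hb hg₁ hg₂).exists_coloring
  let c' (e : E) : Fin k := ⟨c (.inl e), hc_lt _ (mem_univ _)⟩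
  have hp_le (j : Fin k) : p ≤ #{e | c' e = j} := by
    simpa [c', Fin.ext_iff, Nat.sub_sub_self hpX] using card_sub_le_card_filter_inl (hc j j.2)
  have hsum : ∑ _j : Fin k, p = ∑ j, #{e | c' e = j} := by
    rw [← card_eq_sum_card_fiberwise fun _ _ ↦ mem_univ _, card_univ, hcard]
    simp
  have hp := (sum_eq_sum_iff_of_le fun j _ ↦ hp_le j).mp hsum
  refine ⟨c', fun j ↦ ⟨(hp j (mem_univ j)).symm, ?_⟩⟩
  obtain ⟨hinj₁, hinj₂⟩ := (hc j j.2).injOn_of_degree_one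
  simpa [c', Fin.ext_iff] using
    And.intro hinj₁.preimage_inl_of_sumElim hinj₂.preimage_inl_of_sumElim

end BipartiteMultigraph

/-- A bipartite multigraph (edges `E` with endpoint maps `a`, `b` into the two sides)
with exactly `k·p` edges and maximum degree at most `k` partitions into `k` matchings
of cardinality exactly `p`. -/
theorem stmt4 {A B E : Type*} [Fintype E] [DecidableEq E] [DecidableEq A] [DecidableEq B]
    (a : E → A) (b : E → B) (k p : ℕ)
    (hcard : Fintype.card E = k * p)
    (hA : ∀ v : A, (Finset.univ.filter (fun e => a e = v)).card ≤ k)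
    (hB : ∀ v : B, (Finset.univ.filter (fun e => b e = v)).card ≤ k) :
    ∃ M : Fin k → Finset E,
      (∀ i j, i ≠ j → Disjoint (M i) (M j)) ∧
      (Finset.univ.biUnion M = Finset.univ) ∧
      (∀ j, (M j).card = p) ∧
      (∀ j, ∀ e ∈ M j, ∀ e' ∈ M j, e ≠ e' → a e ≠ a e' ∧ b e ≠ b e') := by
  obtain ⟨c, hc⟩ := BipartiteMultigraph.exists_equitable_coloring (Set.rangeFactorization a)
    (Set.rangeFactorization b) hcard (fun x ↦ by simpa [Subtype.ext_iff] using hA x)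
    (fun y ↦ by simpa [Subtype.ext_iff] using hB y)
  refine ⟨fun j ↦ {e | c e = j},
    fun i j hij ↦ disjoint_filter.mpr fun _ _ hi hj ↦ hij (hi ▸ hj), by ext; simp,
    fun j ↦ (hc j).1, fun j e he e' he' hne ↦ ?_⟩
  simp only [mem_filter, mem_univ, true_and] at he he'
  exact ⟨fun h ↦ hne ((hc j).2.1 he he' (Subtype.ext h)),
    fun h ↦ hne ((hc j).2.2 he he' (Subtype.ext h))⟩
end

section
/- Let D = (V,E) be a directed graph, s, t ∈ V with s ≠ t. Construct D' from D by adding a new directed path P from s to t of length |V| through |V| − 1 new internal vertices. Then D has a Hamiltonian path from s to t if and only if D' contains two st-paths P₁, P₂, each of length at most |V| (counting unit edge lengths), with |E(P₁) △ E(P₂)| ≥ 2|V| − 1. -/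
open scoped symmDiff

/-- A (simple) directed path on edge set `E` from `s` to `t`, as a vertex list. -/
def IsPathOn {V : Type*} (E : Set (V × V)) (s t : V) (vs : List V) : Prop :=
  vs.Chain' (fun x y => (x, y) ∈ E) ∧ vs.head? = some s ∧ vs.getLast? = some t ∧ vs.Nodup

/-- The list of directed edges of a vertex list. -/
def edgeList {V : Type*} (vs : List V) : List (V × V) := vs.zip vs.tail

/-- The edge set of the augmented graph `D'`: the edges of `D` together with a new
`st`-path of `|V|` unit-length edges through `|V| − 1` fresh internal vertices. -/
def augEdges {V : Type*} [Fintype V] (E : Set (V × V)) (s t : V) :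
    Set ((V ⊕ Fin (Fintype.card V - 1)) × (V ⊕ Fin (Fintype.card V - 1))) :=
  {e | (∃ u v, (u, v) ∈ E ∧ e = (Sum.inl u, Sum.inl v)) ∨
       (∃ i : Fin (Fintype.card V - 1), (i : ℕ) = 0 ∧ e = (Sum.inl s, Sum.inr i)) ∨
       (∃ i j : Fin (Fintype.card V - 1), (j : ℕ) = (i : ℕ) + 1 ∧
          e = (Sum.inr i, Sum.inr j)) ∨
       (∃ i : Fin (Fintype.card V - 1), (i : ℕ) = Fintype.card V - 2 ∧
          e = (Sum.inr i, Sum.inl t))}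

/-! The fresh vertices of `D'` have in- and out-degree one, so an `st`-path of `D'` that enters
them is the new path `P` itself, and every other `st`-path lies in `D` and has at most `|V| - 1`
edges. Two paths of `D` therefore differ in at most `2|V| - 2` edges and two copies of `P` in none,
so a pair reaching `2|V| - 1` consists of `P`, whose `|V|` edges all avoid `D`, and a path of `D`
with at least `|V| - 1` edges, that is, a Hamiltonian one. -/

section Paths

variable {V W : Type*}

theorem edgeList_cons_cons (a b : V) (l : List V) :
    edgeList (a :: b :: l) = (a, b) :: edgeList (b :: l) := rfl

theorem length_edgeList (l : List V) : (edgeList l).length = l.length - 1 := by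
  simp [edgeList]

theorem edgeList_map (f : V → W) (l : List V) :
    edgeList (l.map f) = (edgeList l).map (Prod.map f f) := by
  rw [edgeList, edgeList, ← List.map_tail, List.zip_map]

theorem nodup_edgeList {l : List V} (h : l.Nodup) : (edgeList l).Nodup := by
  refine List.Nodup.of_map Prod.snd ?_
  rw [edgeList, List.map_snd_zip (by simp)]
  exact h.tail

theorem card_toFinset_edgeList [DecidableEq V] {l : List V} (h : l.Nodup) :
    (edgeList l).toFinset.card = l.length - 1 := by
  rw [List.toFinset_card_of_nodup (nodup_edgeList h), length_edgeList]

theorem List.IsChain.rel_of_mem_edgeList {R : V → V → Prop} {l : List V} (h : l.IsChain R)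
    {e : V × V} (he : e ∈ edgeList l) : R e.1 e.2 := by
  induction l with
  | nil => simp [edgeList] at he
  | cons a l ih =>
    cases l with
    | nil => simp [edgeList] at he
    | cons b l =>
      rw [List.isChain_cons_cons] at h
      rw [edgeList_cons_cons, List.mem_cons] at he
      rcases he with rfl | he
      exacts [h.1, ih h.2 he]

theorem card_symmDiff_toFinset_edgeList_le [DecidableEq V] {l₁ l₂ : List V} (h₁ : l₁.Nodup)
    (h₂ : l₂.Nodup) :
    ((edgeList l₁).toFinset ∆ (edgeList l₂).toFinset).card ≤
      l₁.length - 1 + (l₂.length - 1) := by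
  rw [← card_toFinset_edgeList h₁, ← card_toFinset_edgeList h₂]
  exact (Finset.card_le_card Finset.symmDiff_subset_union).trans (Finset.card_union_le _ _)

theorem isPathOn_map_iff {E : Set (V × V)} {F : Set (W × W)} {f : V → W}
    (hf : Function.Injective f) (hE : ∀ a b, (f a, f b) ∈ F ↔ (a, b) ∈ E) {s t : V}
    {l : List V} : IsPathOn F (f s) (f t) (l.map f) ↔ IsPathOn E s t l := by
  change List.IsChain _ (l.map f) ∧ _ ↔ List.IsChain _ l ∧ _
  simp only [List.isChain_map, hE, List.head?_map, List.getLast?_map,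
    List.nodup_map_iff hf, Option.map_eq_some_iff, hf.eq_iff, exists_eq_right]

end Paths

section Augmented

variable {V : Type*}

def augPath (s t : V) (m : ℕ) : List (V ⊕ Fin m) :=
  Sum.inl s :: ((List.finRange m).map Sum.inr ++ [Sum.inl t])

theorem length_augPath (s t : V) (m : ℕ) : (augPath s t m).length = m + 2 := by
  simp [augPath]

theorem nodup_augPath {s t : V} (hst : s ≠ t) (m : ℕ) : (augPath s t m).Nodup := by
  simp [augPath, List.nodup_append, hst, (List.nodup_finRange m).map Sum.inr_injective]

theorem isChain_augPath {s t : V} {m : ℕ} (hm : 0 < m) {R : V ⊕ Fin m → V ⊕ Fin m → Prop}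
    (hs : ∀ i : Fin m, (i : ℕ) = 0 → R (.inl s) (.inr i))
    (hstep : ∀ i j : Fin m, (j : ℕ) = i + 1 → R (.inr i) (.inr j))
    (ht : ∀ i : Fin m, (i : ℕ) = m - 1 → R (.inr i) (.inl t)) :
    (augPath s t m).IsChain R := by
  obtain ⟨k, rfl⟩ : ∃ k, m = k + 1 := ⟨m - 1, by omega⟩
  have hrange : (List.finRange (k + 1)).IsChain (fun i j : Fin (k + 1) => (j : ℕ) = i + 1) := by
    rw [List.isChain_iff_getElem]
    intro i hi
    simp
  simp only [augPath, List.isChain_cons, List.isChain_append, List.isChain_map]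
  refine ⟨?_, hrange.imp fun i j h => hstep i j h, ?_⟩
  · simpa [List.finRange_succ] using hs 0 rfl
  · simpa [List.finRange_succ_last] using ht (Fin.last k) rfl

theorem disjoint_edgeList_map_inl_augPath [DecidableEq V] {s t : V} {m : ℕ} (hm : 0 < m)
    (q : List V) :
    Disjoint (edgeList (q.map Sum.inl)).toFinset (edgeList (augPath s t m)).toFinset := by
  have hnew : (augPath s t m).IsChain (fun x y => x.isRight ∨ y.isRight) :=
    isChain_augPath hm (by simp) (by simp) (by simp)
  rw [Finset.disjoint_left]
  intro e he he'
  simp only [List.mem_toFinset, edgeList_map, List.mem_map] at he he'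
  obtain ⟨e, -, rfl⟩ := he
  simpa using hnew.rel_of_mem_edgeList he'

theorem card_symmDiff_edgeList_map_inl_augPath [DecidableEq V] {s t : V} (hst : s ≠ t) {m : ℕ}
    (hm : 0 < m) {q : List V} (hq : q.Nodup) :
    ((edgeList (q.map Sum.inl)).toFinset ∆ (edgeList (augPath s t m)).toFinset).card =
      q.length - 1 + (m + 1) := by
  have hdisj := disjoint_edgeList_map_inl_augPath (s := s) (t := t) hm q
  rw [hdisj.symmDiff_eq_sup, Finset.sup_eq_union, Finset.card_union_of_disjoint hdisj,
    card_toFinset_edgeList (hq.map Sum.inl_injective), card_toFinset_edgeList (nodup_augPath hst m),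
    List.length_map, length_augPath]
  omega

variable [Fintype V] {E : Set (V × V)} {s t : V}

theorem inl_inl_mem_augEdges {u v : V} :
    (Sum.inl u, Sum.inl v) ∈ augEdges E s t ↔ (u, v) ∈ E := by
  simp [augEdges]

theorem inl_mem_augEdges {u : V} {y : V ⊕ Fin (Fintype.card V - 1)} :
    (Sum.inl u, y) ∈ augEdges E s t ↔
      (∃ v, (u, v) ∈ E ∧ y = .inl v) ∨
        ∃ j : Fin _, (j : ℕ) = 0 ∧ u = s ∧ y = .inr j := by
  simp [augEdges]

theorem inr_mem_augEdges {i : Fin (Fintype.card V - 1)} {y : V ⊕ Fin (Fintype.card V - 1)} :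
    (Sum.inr i, y) ∈ augEdges E s t ↔
      (∃ j : Fin _, (j : ℕ) = i + 1 ∧ y = .inr j) ∨
        (i : ℕ) = Fintype.card V - 2 ∧ y = .inl t := by
  simp [augEdges]

theorem isPathOn_augPath (hst : s ≠ t) :
    IsPathOn (augEdges E s t) (.inl s) (.inl t) (augPath s t (Fintype.card V - 1)) := by
  have hm : 0 < Fintype.card V - 1 := by
    have := Fintype.one_lt_card_iff.2 ⟨s, t, hst⟩
    omega
  refine ⟨isChain_augPath hm ?_ ?_ ?_, rfl, by simp [augPath, List.getLast?_cons],
    nodup_augPath hst _⟩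
  · exact fun i hi => inl_mem_augEdges.2 (.inr ⟨i, hi, rfl, rfl⟩)
  · exact fun i j hj => inr_mem_augEdges.2 (.inl ⟨j, hj, rfl⟩)
  · exact fun i hi => inr_mem_augEdges.2 (.inr ⟨by omega, rfl⟩)

theorem eq_augPath_drop_of_isChain {j : Fin (Fintype.card V - 1)} {l : List _}
    (hc : (Sum.inr j :: l).IsChain (fun x y => (x, y) ∈ augEdges E s t))
    (hl : (Sum.inr j :: l).getLast? = some (.inl t)) (hnd : (Sum.inr j :: l).Nodup) :
    Sum.inr j :: l = ((List.finRange _).drop j).map Sum.inr ++ [.inl t] := by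
  induction l generalizing j with
  | nil => simp at hl
  | cons y l ih =>
    rw [List.isChain_cons_cons] at hc
    have hj : (j : ℕ) < (List.finRange (Fintype.card V - 1)).length := by simp
    rw [List.drop_eq_getElem_cons hj, List.getElem_finRange]
    rcases inr_mem_augEdges.1 hc.1 with ⟨j', hj', rfl⟩ | ⟨hlast, rfl⟩
    · rw [ih hc.2 (by rwa [List.getLast?_cons_cons] at hl) hnd.of_cons, ← hj']
      rfl
    · obtain rfl : l = [] := by
        rcases l with _ | ⟨z, l⟩
        · rfl
        rw [List.getLast?_cons_cons, List.getLast?_cons_cons] at hl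
        exact absurd (List.mem_of_getLast? hl) (List.nodup_cons.1 hnd.of_cons).1
      have hdrop : (List.finRange (Fintype.card V - 1)).drop (j + 1) = [] :=
        List.drop_eq_nil_of_le (by rw [List.length_finRange]; omega)
      simp [hdrop]

theorem isPathOn_augEdges_map_inl_iff {q : List V} :
    IsPathOn (augEdges E s t) (.inl s) (.inl t) (q.map Sum.inl) ↔ IsPathOn E s t q :=
  isPathOn_map_iff Sum.inl_injective fun _ _ => inl_inl_mem_augEdges

theorem eq_map_inl_or_eq_augPath_of_isChain {u : V} {l : List (V ⊕ Fin (Fintype.card V - 1))}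
    (hc : (Sum.inl u :: l).IsChain (fun x y => (x, y) ∈ augEdges E s t))
    (hl : (Sum.inl u :: l).getLast? = some (.inl t)) (hnd : (Sum.inl u :: l).Nodup)
    (hs : Sum.inl s ∉ l) :
    (∃ q : List V, Sum.inl u :: l = q.map Sum.inl) ∨ Sum.inl u :: l = augPath s t _ := by
  induction l generalizing u with
  | nil => exact .inl ⟨[u], rfl⟩
  | cons y l ih =>
    rw [List.isChain_cons_cons] at hc
    rw [List.getLast?_cons_cons] at hl
    rcases inl_mem_augEdges.1 hc.1 with ⟨v, -, rfl⟩ | ⟨j, hj, rfl, rfl⟩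
    · rcases ih hc.2 hl hnd.of_cons (fun h => hs (.tail _ h)) with ⟨q, hq⟩ | hq
      · exact .inl ⟨u :: q, by rw [List.map_cons, ← hq]⟩
      · simp [hq, augPath] at hs
    · right
      rw [eq_augPath_drop_of_isChain hc.2 hl hnd.of_cons, hj, List.drop_zero]
      rfl

theorem IsPathOn.eq_map_inl_or_eq_augPath {p : List (V ⊕ Fin (Fintype.card V - 1))}
    (hp : IsPathOn (augEdges E s t) (.inl s) (.inl t) p) :
    (∃ q, IsPathOn E s t q ∧ p = q.map Sum.inl) ∨ p = augPath s t _ := by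
  obtain ⟨hc, hh, hl, hnd⟩ := hp
  obtain ⟨l, rfl⟩ : ∃ l, p = .inl s :: l := by
    cases p with
    | nil => simp at hh
    | cons a l => exact ⟨l, by simpa using hh⟩
  refine (eq_map_inl_or_eq_augPath_of_isChain hc hl hnd (List.nodup_cons.1 hnd).1).imp_left ?_
  rintro ⟨q, hq⟩
  exact ⟨q, isPathOn_augEdges_map_inl_iff.1 (hq ▸ ⟨hc, hh, hl, hnd⟩), hq⟩

end Augmented

/-- `D` has a Hamiltonian `st`-path iff the augmented graph `D'` has two `st`-paths,
each with at most `|V|` edges, whose edge sets have symmetric difference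
of size at least `2|V| − 1`. -/
theorem stmt8 {V : Type*} [Fintype V] [DecidableEq V] (E : Set (V × V)) (s t : V)
    (hst : s ≠ t) :
    (∃ p : List V, IsPathOn E s t p ∧ p.length = Fintype.card V) ↔
    (∃ p₁ p₂ : List (V ⊕ Fin (Fintype.card V - 1)),
      IsPathOn (augEdges E s t) (Sum.inl s) (Sum.inl t) p₁ ∧
      IsPathOn (augEdges E s t) (Sum.inl s) (Sum.inl t) p₂ ∧
      p₁.length ≤ Fintype.card V + 1 ∧ p₂.length ≤ Fintype.card V + 1 ∧
      2 * Fintype.card V - 1 ≤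
        ((edgeList p₁).toFinset ∆ (edgeList p₂).toFinset).card) := by
  have hm : 0 < Fintype.card V - 1 := by
    have := Fintype.one_lt_card_iff.2 ⟨s, t, hst⟩
    omega
  have hP {q : List V} (hq : q.Nodup) :=
    card_symmDiff_edgeList_map_inl_augPath (s := s) (t := t) hst hm hq
  constructor
  · rintro ⟨q, hq, hlen⟩
    refine ⟨q.map Sum.inl, augPath s t _, isPathOn_augEdges_map_inl_iff.2 hq,
      isPathOn_augPath hst, by simp [hlen], by rw [length_augPath]; omega, ?_⟩
    rw [hP hq.2.2.2, hlen]
    omega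
  · rintro ⟨p₁, p₂, hp₁, hp₂, -, -, hcard⟩
    rcases hp₁.eq_map_inl_or_eq_augPath with ⟨q₁, hq₁, rfl⟩ | rfl <;>
      rcases hp₂.eq_map_inl_or_eq_augPath with ⟨q₂, hq₂, rfl⟩ | rfl
    · have h := hcard.trans (card_symmDiff_toFinset_edgeList_le
        (hq₁.2.2.2.map Sum.inl_injective) (hq₂.2.2.2.map Sum.inl_injective))
      simp only [List.length_map] at h
      have := hq₁.2.2.2.length_le_card
      have := hq₂.2.2.2.length_le_card
      omega
    · rw [hP hq₁.2.2.2] at hcard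
      exact ⟨q₁, hq₁, le_antisymm hq₁.2.2.2.length_le_card (by omega)⟩
    · rw [symmDiff_comm, hP hq₂.2.2.2] at hcard
      exact ⟨q₂, hq₂, le_antisymm hq₂.2.2.2.length_le_card (by omega)⟩
    · rw [symmDiff_self, Finset.bot_eq_empty, Finset.card_empty] at hcard
      omega
end
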